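/- arXiv:1702.06880 — 2 statements merged into one kernel-verified Lean document; each statement's English description precedes it below -/
import Mathlib

section
/- (Interpolation) Let n ≥ 1 be an integer, s_n := [n/2] + 1, and s ≥ s_n. Then there exists an increasing function s ↦ C(s) such that for all u, v ∈ H^s(𝕋^n): ‖uv‖_s ≤ C(s) ‖u‖_s ‖v‖_{s_n} + C(s_n) ‖u‖_{s_n} ‖v‖_s. In particular H^s(𝕋^n) is an algebra for s ≥ s_n. -/
/-- Euclidean norm of a lattice point `j ∈ ℤ^n`. -/
noncomputable def euclNormZ {n : ℕ} (j : Fin n → ℤ) : ℝ :=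
  Real.sqrt (∑ i, ((j i : ℝ)) ^ 2)

/-- The weight `⟨j⟩ := max{1,|j|}`. -/
noncomputable def wt1 {n : ℕ} (j : Fin n → ℤ) : ℝ := max 1 (euclNormZ j)

/-- Square of the Sobolev `H^s(𝕋^n)` norm of a function given through its Fourier
coefficients `u : ℤ^n → ℂ`: `‖u‖_s² = Σ_j ⟨j⟩^{2s} |û_j|²`. -/
noncomputable def sobSq {n : ℕ} (s : ℝ) (u : (Fin n → ℤ) → ℂ) : ℝ :=
  ∑' j : Fin n → ℤ, (wt1 j) ^ (2 * s) * ‖u j‖ ^ 2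

/-- The Sobolev `H^s(𝕋^n)` norm (on the Fourier side). -/
noncomputable def sobN {n : ℕ} (s : ℝ) (u : (Fin n → ℤ) → ℂ) : ℝ :=
  Real.sqrt (sobSq s u)

/-- Membership in `H^s(𝕋^n)` (on the Fourier side): the weighted series converges. -/
def MemSob {n : ℕ} (s : ℝ) (u : (Fin n → ℤ) → ℂ) : Prop :=
  Summable fun j : Fin n → ℤ => (wt1 j) ^ (2 * s) * ‖u j‖ ^ 2

/-- Fourier coefficients of the pointwise product `u·v`: the convolution of `u` and `v`. -/
noncomputable def convC {n : ℕ} (u v : (Fin n → ℤ) → ℂ) : (Fin n → ℤ) → ℂ :=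
  fun j => ∑' k : Fin n → ℤ, u k * v (j - k)

/-!
On the Fourier side the product is the convolution `convC u v`. Since `⟨j⟩ ≤ ⟨k⟩ + ⟨j - k⟩` and
`(a + b)^s ≤ (2s)^s a^s + 2^σ b^s` for `1 ≤ σ ≤ s`, the weighted coefficient `⟨j⟩^s |(uv)^(j)|` is
bounded by `(2s)^s (⟨·⟩^s |û|) ∗ |v̂|` plus `2^σ |û| ∗ (⟨·⟩^s |v̂|)`. Young's inequality
`‖f ∗ g‖_{ℓ²} ≤ ‖f‖_{ℓ²} ‖g‖_{ℓ¹}` and Cauchy–Schwarz `‖v̂‖_{ℓ¹} ≤ (∑ₖ ⟨k⟩^{-2σ})^{1/2} ‖v‖_σ`,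
where the sum is finite because `2σ > n`, give the estimate with
`C(s) = (2s)^s (∑ₖ ⟨k⟩^{-2σ})^{1/2}`.
The estimates are carried out in `ℝ≥0∞`, where every series has a sum.
-/

open scoped ENNReal
open MeasureTheory

section L2
variable {α : Type*}

noncomputable def l2Norm (f : α → ℝ≥0∞) : ℝ≥0∞ := (∑' a, f a ^ 2) ^ (2⁻¹ : ℝ)

lemma l2Norm_mono {f g : α → ℝ≥0∞} (h : ∀ a, f a ≤ g a) : l2Norm f ≤ l2Norm g := by
  unfold l2Norm
  gcongr with a
  exact h a

lemma l2Norm_const_mul (c : ℝ≥0∞) (f : α → ℝ≥0∞) :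
    l2Norm (fun a => c * f a) = c * l2Norm f := by
  simp only [l2Norm, mul_pow, ENNReal.tsum_mul_left]
  rw [ENNReal.mul_rpow_of_nonneg _ _ (by norm_num), ← ENNReal.rpow_natCast, ← ENNReal.rpow_mul]
  norm_num

lemma rpow_two_inv_sq (x : ℝ≥0∞) : (x ^ (2⁻¹ : ℝ)) ^ 2 = x := by
  rw [← ENNReal.rpow_natCast, ← ENNReal.rpow_mul]
  norm_num

/- The series are integrals against the counting measure for the discrete σ-algebra, where
Hölder's and Minkowski's inequalities are available. -/
lemma tsum_mul_le_l2Norm_mul (f g : α → ℝ≥0∞) : ∑' a, f a * g a ≤ l2Norm f * l2Norm g := by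
  let _ : MeasurableSpace α := ⊤
  have h := ENNReal.lintegral_mul_le_Lp_mul_Lq (Measure.count : Measure α)
    Real.HolderConjugate.two_two (measurable_from_top (f := f)).aemeasurable
    (measurable_from_top (f := g)).aemeasurable
  simpa [lintegral_count, l2Norm, ENNReal.rpow_two] using h

lemma l2Norm_add_le (f g : α → ℝ≥0∞) :
    l2Norm (fun a => f a + g a) ≤ l2Norm f + l2Norm g := by
  let _ : MeasurableSpace α := ⊤
  have h := ENNReal.lintegral_Lp_add_le (μ := (Measure.count : Measure α))
    (measurable_from_top (f := f)).aemeasurable (measurable_from_top (f := g)).aemeasurable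
    one_le_two
  simpa [lintegral_count, l2Norm, ENNReal.rpow_two] using h

end L2

section Convolution
variable {G : Type*} [AddCommGroup G]

noncomputable def discreteConv (f g : G → ℝ≥0∞) (j : G) : ℝ≥0∞ := ∑' k, f k * g (j - k)

lemma discreteConv_comm (f g : G → ℝ≥0∞) : discreteConv f g = discreteConv g f := by
  funext j
  rw [discreteConv, ← (Equiv.subLeft j).tsum_eq]
  simp [discreteConv, mul_comm]

/-- Cauchy–Schwarz against the measure `g (j - ·)`, whose mass is `∑ g`. -/
lemma discreteConv_sq_le (f g : G → ℝ≥0∞) (j : G) :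
    discreteConv f g j ^ 2 ≤ (∑' k, f k ^ 2 * g (j - k)) * ∑' k, g k := by
  have hsplit : ∀ k, f k * g (j - k) =
      (f k * g (j - k) ^ (2⁻¹ : ℝ)) * g (j - k) ^ (2⁻¹ : ℝ) := by
    intro k
    rw [mul_assoc, ← ENNReal.rpow_add_of_nonneg _ _ (by norm_num) (by norm_num)]
    norm_num
  have hcs := tsum_mul_le_l2Norm_mul (fun k => f k * g (j - k) ^ (2⁻¹ : ℝ))
    (fun k => g (j - k) ^ (2⁻¹ : ℝ))
  rw [discreteConv, tsum_congr hsplit]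
  calc _ ≤ (l2Norm (fun k => f k * g (j - k) ^ (2⁻¹ : ℝ)) *
        l2Norm (fun k => g (j - k) ^ (2⁻¹ : ℝ))) ^ 2 := by gcongr
    _ = _ := by
      simp only [l2Norm, mul_pow, rpow_two_inv_sq]
      exact congrArg _ ((Equiv.subLeft j).tsum_eq g)

lemma l2Norm_discreteConv_le (f g : G → ℝ≥0∞) :
    l2Norm (discreteConv f g) ≤ l2Norm f * ∑' k, g k := by
  have hsq : ∑' j, discreteConv f g j ^ 2 ≤ (∑' k, f k ^ 2) * (∑' k, g k) ^ 2 :=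
    calc ∑' j, discreteConv f g j ^ 2
        ≤ ∑' j, (∑' k, f k ^ 2 * g (j - k)) * ∑' k, g k :=
          ENNReal.tsum_le_tsum fun j => discreteConv_sq_le f g j
      _ = (∑' k, f k ^ 2 * ∑' j, g (j - k)) * ∑' k, g k := by
          rw [ENNReal.tsum_mul_right, ENNReal.tsum_comm]
          simp only [ENNReal.tsum_mul_left]
      _ = (∑' k, f k ^ 2) * (∑' k, g k) ^ 2 := by
          have htranslate : ∀ k, ∑' j, g (j - k) = ∑' j, g j :=
            fun k => (Equiv.subRight k).tsum_eq g
          simp only [htranslate, ENNReal.tsum_mul_right]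
          ring
  calc l2Norm (discreteConv f g) ≤ ((∑' k, f k ^ 2) * (∑' k, g k) ^ 2) ^ (2⁻¹ : ℝ) := by
        unfold l2Norm; gcongr
    _ = _ := by
      rw [ENNReal.mul_rpow_of_nonneg _ _ (by norm_num), ← ENNReal.rpow_natCast,
        ← ENNReal.rpow_mul]
      norm_num [l2Norm]

end Convolution

lemma two_rpow_neg_le {x : ℝ} (hx0 : 0 ≤ x) (hx1 : x ≤ 1) : (2 : ℝ) ^ (-x) ≤ 1 - x / 2 := by
  have h := rpow_one_add_le_one_add_mul_self (s := -1 / 2) (by norm_num) hx0 hx1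
  rw [Real.rpow_neg zero_le_two, ← Real.inv_rpow zero_le_two]
  norm_num at h ⊢
  linarith

/-- The coefficient of `b ^ s` does not grow with `s`: split according to whether
`a + b ≤ 2 ^ (σ / s) * b`. -/
lemma add_rpow_le {σ s a b : ℝ} (hσ : 1 ≤ σ) (hσs : σ ≤ s) (ha : 0 ≤ a) (hb : 0 ≤ b) :
    (a + b) ^ s ≤ (2 * s) ^ s * a ^ s + 2 ^ σ * b ^ s := by
  have hs : 0 < s := by linarith
  have hθs : ((2 : ℝ) ^ (σ / s)) ^ s = 2 ^ σ := by
    rw [← Real.rpow_mul zero_le_two, div_mul_cancel₀ _ hs.ne']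
  rcases le_or_gt (a + b) (2 ^ (σ / s) * b) with hle | hlt
  · calc (a + b) ^ s ≤ (2 ^ (σ / s) * b) ^ s := by gcongr
      _ = 2 ^ σ * b ^ s := by rw [Real.mul_rpow (by positivity) hb, hθs]
      _ ≤ _ := le_add_of_nonneg_left (by positivity)
  · have hb_small : b ≤ (1 - σ / s / 2) * (a + b) := by
      have hθ : (2 : ℝ) ^ (-(σ / s)) * 2 ^ (σ / s) = 1 := by
        rw [← Real.rpow_add zero_lt_two, neg_add_cancel, Real.rpow_zero]
      calc b = 2 ^ (-(σ / s)) * (2 ^ (σ / s) * b) := by rw [← mul_assoc, hθ, one_mul]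
        _ ≤ 2 ^ (-(σ / s)) * (a + b) := by gcongr
        _ ≤ _ := by
          gcongr
          exact two_rpow_neg_le (by positivity) (by rwa [div_le_one hs])
    have hab : a + b ≤ 2 * s * a := by
      have : (a + b) * (σ / s) ≤ 2 * a := by linarith
      rw [mul_div_assoc', div_le_iff₀ hs] at this
      nlinarith
    calc (a + b) ^ s ≤ (2 * s * a) ^ s := by gcongr
      _ = (2 * s) ^ s * a ^ s := Real.mul_rpow (by positivity) ha
      _ ≤ _ := le_add_of_nonneg_right (by positivity)

section Lattice
variable {n : ℕ}

abbrev stdLattice (n : ℕ) : Submodule ℤ (EuclideanSpace ℝ (Fin n)) :=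
  Submodule.span ℤ (Set.range (EuclideanSpace.basisFun (Fin n) ℝ).toBasis)

noncomputable def stdLatticeEquiv (n : ℕ) : (Fin n → ℤ) ≃ₗ[ℤ] stdLattice n :=
  ((EuclideanSpace.basisFun (Fin n) ℝ).toBasis.restrictScalars ℤ).equivFun.symm

lemma coe_stdLatticeEquiv (k : Fin n → ℤ) :
    (stdLatticeEquiv n k : EuclideanSpace ℝ (Fin n)) = WithLp.toLp 2 (fun i => (k i : ℝ)) := by
  rw [stdLatticeEquiv, Module.Basis.equivFun_symm_apply, Submodule.coe_sum]
  simp only [Submodule.coe_smul, Module.Basis.restrictScalars_apply]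
  ext i
  simp [Pi.single_apply]

lemma finrank_stdLattice : Module.finrank ℤ (stdLattice n) = n := by
  rw [Module.finrank_eq_card_basis
    ((EuclideanSpace.basisFun (Fin n) ℝ).toBasis.restrictScalars ℤ), Fintype.card_fin]

lemma euclNormZ_eq_norm (k : Fin n → ℤ) : euclNormZ k = ‖stdLatticeEquiv n k‖ := by
  rw [Submodule.coe_norm, coe_stdLatticeEquiv, EuclideanSpace.norm_eq, euclNormZ]
  simp

lemma one_le_wt1 (k : Fin n → ℤ) : 1 ≤ wt1 k := le_max_left _ _

lemma wt1_pos (k : Fin n → ℤ) : 0 < wt1 k := one_pos.trans_le (one_le_wt1 k)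

lemma wt1_le_add (j k : Fin n → ℤ) : wt1 j ≤ wt1 k + wt1 (j - k) := by
  have hnorm : euclNormZ j ≤ euclNormZ k + euclNormZ (j - k) := by
    simp only [euclNormZ_eq_norm, map_sub]
    simpa using norm_add_le (stdLatticeEquiv n k) (stdLatticeEquiv n j - stdLatticeEquiv n k)
  have hk : euclNormZ k ≤ wt1 k := le_max_right _ _
  have hjk : euclNormZ (j - k) ≤ wt1 (j - k) := le_max_right _ _
  exact max_le (by linarith [one_le_wt1 k, wt1_pos (j - k)]) (by linarith)

lemma summable_wt1_rpow_neg {r : ℝ} (hr : n < r) : Summable fun k : Fin n → ℤ => wt1 k ^ (-r) := by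
  have hnorm : Summable fun k : Fin n → ℤ => euclNormZ k ^ (-r) := by
    simp only [euclNormZ_eq_norm]
    exact (ZLattice.summable_norm_rpow _ (-r) (by rw [finrank_stdLattice]; linarith)).comp_injective
      (stdLatticeEquiv n).injective
  refine Summable.of_nonneg_of_le (fun k => (Real.rpow_pos_of_pos (wt1_pos k) _).le)
    (fun k => ?_) (hnorm.add (summable_of_ne_finset_zero (s := {0})
      (f := fun k : Fin n → ℤ => if k = 0 then (1 : ℝ) else 0) (by simp_all)))
  rcases eq_or_ne k 0 with rfl | hk
  · simp [wt1, euclNormZ_eq_norm, Real.rpow_nonneg]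
  · have hpos : 0 < euclNormZ k := by
      rw [euclNormZ_eq_norm, norm_pos_iff]
      exact (map_ne_zero_iff _ (stdLatticeEquiv n).injective).mpr hk
    simp only [hk, if_false, add_zero]
    exact Real.rpow_le_rpow_of_nonpos hpos (le_max_right _ _) (by linarith)

noncomputable def latticeZeta (n : ℕ) (r : ℝ) : ℝ := ∑' k : Fin n → ℤ, wt1 k ^ (-r)

lemma latticeZeta_pos {r : ℝ} (hr : n < r) : 0 < latticeZeta n r :=
  (summable_wt1_rpow_neg hr).tsum_pos (fun k => (Real.rpow_pos_of_pos (wt1_pos k) _).le) 0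
    (Real.rpow_pos_of_pos (wt1_pos 0) _)

end Lattice

section Sobolev
variable {n : ℕ}

noncomputable def sobE (s : ℝ) (u : (Fin n → ℤ) → ℂ) : ℝ≥0∞ :=
  l2Norm fun j => ENNReal.ofReal (wt1 j ^ s) * ‖u j‖ₑ

lemma sobE_sq_term (s : ℝ) (u : (Fin n → ℤ) → ℂ) (j : Fin n → ℤ) :
    (ENNReal.ofReal (wt1 j ^ s) * ‖u j‖ₑ) ^ 2 = ENNReal.ofReal (wt1 j ^ (2 * s) * ‖u j‖ ^ 2) := by
  have hw := Real.rpow_nonneg (wt1_pos j).le s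
  rw [← ofReal_norm, ← ENNReal.ofReal_mul hw, ← ENNReal.ofReal_pow (by positivity),
    mul_pow, ← Real.rpow_natCast, ← Real.rpow_mul (wt1_pos j).le, mul_comm s]
  norm_num

lemma wt1_rpow_mul_norm_sq_nonneg (s : ℝ) (u : (Fin n → ℤ) → ℂ) (j : Fin n → ℤ) :
    0 ≤ wt1 j ^ (2 * s) * ‖u j‖ ^ 2 :=
  mul_nonneg (Real.rpow_nonneg (wt1_pos j).le _) (sq_nonneg _)

lemma sobE_eq (s : ℝ) (u : (Fin n → ℤ) → ℂ) :
    sobE s u = (∑' j, ENNReal.ofReal (wt1 j ^ (2 * s) * ‖u j‖ ^ 2)) ^ (2⁻¹ : ℝ) := by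
  simp only [sobE, l2Norm, sobE_sq_term]

lemma sobN_eq_toReal_sobE (s : ℝ) (u : (Fin n → ℤ) → ℂ) : sobN s u = (sobE s u).toReal := by
  rw [sobE_eq, ← ENNReal.toReal_rpow, ENNReal.tsum_toReal_eq fun _ => ENNReal.ofReal_ne_top,
    sobN, Real.sqrt_eq_rpow, one_div, sobSq]
  congr 2 with j
  exact (ENNReal.toReal_ofReal (wt1_rpow_mul_norm_sq_nonneg s u j)).symm

lemma memSob_iff_sobE_ne_top {s : ℝ} {u : (Fin n → ℤ) → ℂ} : MemSob s u ↔ sobE s u ≠ ∞ := by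
  rw [MemSob, sobE_eq, Ne, ENNReal.rpow_eq_top_iff]
  simp only [inv_neg'', show ¬ (2 : ℝ) < 0 by norm_num, and_false, inv_pos, zero_lt_two, and_true,
    false_or]
  refine ⟨Summable.tsum_ofReal_ne_top, fun h => ?_⟩
  simpa only [ENNReal.toReal_ofReal (wt1_rpow_mul_norm_sq_nonneg s u _)] using
    ENNReal.summable_toReal h

lemma sobE_mono {σ s : ℝ} (hσs : σ ≤ s) (u : (Fin n → ℤ) → ℂ) : sobE σ u ≤ sobE s u :=
  l2Norm_mono fun j => by
    gcongr
    exact one_le_wt1 j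

lemma enorm_convC_le (u v : (Fin n → ℤ) → ℂ) (j : Fin n → ℤ) :
    ‖convC u v j‖ₑ ≤ discreteConv (‖u ·‖ₑ) (‖v ·‖ₑ) j :=
  enorm_tsum_le_tsum_enorm.trans_eq (by simp only [discreteConv, enorm_mul])

end Sobolev

section ProductEstimate
variable {n : ℕ} {σ s : ℝ}

lemma ofReal_wt1_rpow_le (hσ : 1 ≤ σ) (hσs : σ ≤ s) (j k : Fin n → ℤ) :
    ENNReal.ofReal (wt1 j ^ s) ≤ ENNReal.ofReal ((2 * s) ^ s) * ENNReal.ofReal (wt1 k ^ s) +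
      ENNReal.ofReal (2 ^ σ) * ENNReal.ofReal (wt1 (j - k) ^ s) := by
  have hs : 0 ≤ s := by linarith
  have hk := Real.rpow_nonneg (wt1_pos k).le s
  have hjk := Real.rpow_nonneg (wt1_pos (j - k)).le s
  rw [← ENNReal.ofReal_mul (by positivity), ← ENNReal.ofReal_mul (by positivity),
    ← ENNReal.ofReal_add (by positivity) (by positivity)]
  apply ENNReal.ofReal_le_ofReal
  calc wt1 j ^ s ≤ (wt1 k + wt1 (j - k)) ^ s :=
        Real.rpow_le_rpow (wt1_pos j).le (wt1_le_add j k) hs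
    _ ≤ _ := add_rpow_le hσ hσs (wt1_pos k).le (wt1_pos (j - k)).le

lemma ofReal_wt1_rpow_mul_enorm_convC_le (hσ : 1 ≤ σ) (hσs : σ ≤ s) (u v : (Fin n → ℤ) → ℂ)
    (j : Fin n → ℤ) :
    ENNReal.ofReal (wt1 j ^ s) * ‖convC u v j‖ₑ ≤
      ENNReal.ofReal ((2 * s) ^ s) *
          discreteConv (fun k => ENNReal.ofReal (wt1 k ^ s) * ‖u k‖ₑ) (‖v ·‖ₑ) j +
        ENNReal.ofReal (2 ^ σ) *
          discreteConv (‖u ·‖ₑ) (fun k => ENNReal.ofReal (wt1 k ^ s) * ‖v k‖ₑ) j := by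
  calc ENNReal.ofReal (wt1 j ^ s) * ‖convC u v j‖ₑ
      ≤ ENNReal.ofReal (wt1 j ^ s) * discreteConv (‖u ·‖ₑ) (‖v ·‖ₑ) j := by
        gcongr; exact enorm_convC_le u v j
    _ = ∑' k, ENNReal.ofReal (wt1 j ^ s) * (‖u k‖ₑ * ‖v (j - k)‖ₑ) := ENNReal.tsum_mul_left.symm
    _ ≤ ∑' k, (ENNReal.ofReal ((2 * s) ^ s) *
            ((ENNReal.ofReal (wt1 k ^ s) * ‖u k‖ₑ) * ‖v (j - k)‖ₑ) +
          ENNReal.ofReal (2 ^ σ) *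
            (‖u k‖ₑ * (ENNReal.ofReal (wt1 (j - k) ^ s) * ‖v (j - k)‖ₑ))) := by
        refine ENNReal.tsum_le_tsum fun k => ?_
        calc _ ≤ (ENNReal.ofReal ((2 * s) ^ s) * ENNReal.ofReal (wt1 k ^ s) +
              ENNReal.ofReal (2 ^ σ) * ENNReal.ofReal (wt1 (j - k) ^ s)) *
                (‖u k‖ₑ * ‖v (j - k)‖ₑ) := by gcongr; exact ofReal_wt1_rpow_le hσ hσs j k
          _ = _ := by ring
    _ = _ := by rw [ENNReal.tsum_add, ENNReal.tsum_mul_left, ENNReal.tsum_mul_left]; rfl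

lemma l2Norm_ofReal_wt1_rpow_neg (hσn : n < 2 * σ) :
    l2Norm (fun k : Fin n → ℤ => ENNReal.ofReal (wt1 k ^ (-σ))) =
      ENNReal.ofReal √(latticeZeta n (2 * σ)) := by
  have hsq : ∀ k : Fin n → ℤ,
      ENNReal.ofReal (wt1 k ^ (-σ)) ^ 2 = ENNReal.ofReal (wt1 k ^ (-(2 * σ))) := fun k => by
    rw [← ENNReal.ofReal_pow (Real.rpow_nonneg (wt1_pos k).le _), ← Real.rpow_natCast,
      ← Real.rpow_mul (wt1_pos k).le]
    ring_nf
  rw [l2Norm, tsum_congr hsq, ← ENNReal.ofReal_tsum_of_nonneg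
    (fun k => Real.rpow_nonneg (wt1_pos k).le _) (summable_wt1_rpow_neg hσn),
    ENNReal.ofReal_rpow_of_nonneg (tsum_nonneg fun k => Real.rpow_nonneg (wt1_pos k).le _)
      (by norm_num), Real.sqrt_eq_rpow, one_div, latticeZeta]

/-- Cauchy–Schwarz against the weight `⟨k⟩^{-σ}`. -/
lemma tsum_enorm_le_mul_sobE (hσn : n < 2 * σ)
    (u : (Fin n → ℤ) → ℂ) :
    ∑' k, ‖u k‖ₑ ≤ ENNReal.ofReal √(latticeZeta n (2 * σ)) * sobE σ u := by
  have hcancel : ∀ k, ENNReal.ofReal (wt1 k ^ (-σ)) * (ENNReal.ofReal (wt1 k ^ σ) * ‖u k‖ₑ) =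
      ‖u k‖ₑ := fun k => by
    rw [← mul_assoc, ← ENNReal.ofReal_mul (Real.rpow_nonneg (wt1_pos k).le _),
      ← Real.rpow_add (wt1_pos k), neg_add_cancel, Real.rpow_zero, ENNReal.ofReal_one, one_mul]
  rw [← tsum_congr hcancel, ← l2Norm_ofReal_wt1_rpow_neg hσn]
  exact tsum_mul_le_l2Norm_mul _ _

lemma sobE_convC_le (hσ : 1 ≤ σ) (hσs : σ ≤ s)
    (hσn : n < 2 * σ) (u v : (Fin n → ℤ) → ℂ) :
    sobE s (convC u v) ≤
      ENNReal.ofReal ((2 * s) ^ s * √(latticeZeta n (2 * σ))) * sobE s u * sobE σ v +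
        ENNReal.ofReal (2 ^ σ * √(latticeZeta n (2 * σ))) * sobE σ u * sobE s v := by
  set A := ENNReal.ofReal √(latticeZeta n (2 * σ))
  calc sobE s (convC u v)
      ≤ l2Norm fun j => ENNReal.ofReal ((2 * s) ^ s) *
            discreteConv (fun k => ENNReal.ofReal (wt1 k ^ s) * ‖u k‖ₑ) (‖v ·‖ₑ) j +
          ENNReal.ofReal (2 ^ σ) *
            discreteConv (‖u ·‖ₑ) (fun k => ENNReal.ofReal (wt1 k ^ s) * ‖v k‖ₑ) j :=
        l2Norm_mono (ofReal_wt1_rpow_mul_enorm_convC_le hσ hσs u v)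
    _ ≤ ENNReal.ofReal ((2 * s) ^ s) *
            l2Norm (discreteConv (fun k => ENNReal.ofReal (wt1 k ^ s) * ‖u k‖ₑ) (‖v ·‖ₑ)) +
          ENNReal.ofReal (2 ^ σ) *
            l2Norm (discreteConv (fun k => ENNReal.ofReal (wt1 k ^ s) * ‖v k‖ₑ) (‖u ·‖ₑ)) := by
        rw [discreteConv_comm (‖u ·‖ₑ), ← l2Norm_const_mul, ← l2Norm_const_mul]
        exact l2Norm_add_le _ _
    _ ≤ ENNReal.ofReal ((2 * s) ^ s) * (sobE s u * (A * sobE σ v)) +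
          ENNReal.ofReal (2 ^ σ) * (sobE s v * (A * sobE σ u)) := by
        gcongr
        · exact (l2Norm_discreteConv_le _ _).trans
            (by gcongr; exacts [le_rfl, tsum_enorm_le_mul_sobE hσn v])
        · exact (l2Norm_discreteConv_le _ _).trans
            (by gcongr; exacts [le_rfl, tsum_enorm_le_mul_sobE hσn u])
    _ = _ := by
        rw [ENNReal.ofReal_mul (Real.rpow_nonneg (by linarith) s),
          ENNReal.ofReal_mul (by positivity)]
        ring

end ProductEstimate

lemma memSob_convC_and_sobN_le {n : ℕ} {σ s : ℝ} (hσ : 1 ≤ σ) (hσs : σ ≤ s)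
    (hσn : n < 2 * σ) {u v : (Fin n → ℤ) → ℂ}
    (hu : MemSob s u) (hv : MemSob s v) :
    MemSob s (convC u v) ∧
      sobN s (convC u v) ≤
        (2 * s) ^ s * √(latticeZeta n (2 * σ)) * sobN s u * sobN σ v +
          2 ^ σ * √(latticeZeta n (2 * σ)) * sobN σ u * sobN s v := by
  rw [memSob_iff_sobE_ne_top] at hu hv ⊢
  have huσ := ne_top_of_le_ne_top hu (sobE_mono hσs u)
  have hvσ := ne_top_of_le_ne_top hv (sobE_mono hσs v)
  have hbound := sobE_convC_le hσ hσs hσn u v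
  have hfinite : ENNReal.ofReal ((2 * s) ^ s * √(latticeZeta n (2 * σ))) * sobE s u * sobE σ v +
      ENNReal.ofReal (2 ^ σ * √(latticeZeta n (2 * σ))) * sobE σ u * sobE s v ≠ ∞ := by
    finiteness
  refine ⟨ne_top_of_le_ne_top hfinite hbound, ?_⟩
  have hreal := ENNReal.toReal_mono hfinite hbound
  have hcoef₁ : 0 ≤ (2 * s) ^ s * √(latticeZeta n (2 * σ)) :=
    mul_nonneg (Real.rpow_nonneg (by linarith) s) (Real.sqrt_nonneg _)
  have hcoef₂ : 0 ≤ 2 ^ σ * √(latticeZeta n (2 * σ)) := by positivity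
  rw [ENNReal.toReal_add (by finiteness) (by finiteness)] at hreal
  simpa only [ENNReal.toReal_mul, ENNReal.toReal_ofReal hcoef₁, ENNReal.toReal_ofReal hcoef₂,
    ← sobN_eq_toReal_sobE] using hreal

lemma monotone_two_mul_max_one_rpow : Monotone fun s : ℝ => (2 * max s 1) ^ max s 1 := by
  intro a b hab
  have hmax : max a 1 ≤ max b 1 := max_le_max hab le_rfl
  have ha : 1 ≤ max a 1 := le_max_right a 1
  calc (2 * max a 1) ^ max a 1 ≤ (2 * max b 1) ^ max a 1 := by gcongr
    _ ≤ (2 * max b 1) ^ max b 1 := Real.rpow_le_rpow_of_exponent_le (by linarith) hmax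

theorem stmt3_general (n : ℕ) :
    ∃ C : ℝ → ℝ, Monotone C ∧ (∀ s, 0 < C s) ∧
      ∀ s : ℝ, ((n / 2 + 1 : ℕ) : ℝ) ≤ s →
        ∀ u v : (Fin n → ℤ) → ℂ, MemSob s u → MemSob s v →
          MemSob s (convC u v) ∧
          sobN s (convC u v) ≤
            C s * sobN s u * sobN ((n / 2 + 1 : ℕ) : ℝ) v +
              C ((n / 2 + 1 : ℕ) : ℝ) * sobN ((n / 2 + 1 : ℕ) : ℝ) u * sobN s v := by
  have hσn : (n : ℝ) < 2 * ((n / 2 + 1 : ℕ) : ℝ) := mod_cast (by omega : n < 2 * (n / 2 + 1))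
  set σ : ℝ := ((n / 2 + 1 : ℕ) : ℝ)
  have hσ : 1 ≤ σ := by simp [σ]
  have hA : 0 < √(latticeZeta n (2 * σ)) := Real.sqrt_pos.mpr (latticeZeta_pos hσn)
  refine ⟨fun s => (2 * max s 1) ^ max s 1 * √(latticeZeta n (2 * σ)),
    monotone_two_mul_max_one_rpow.mul_const hA.le, fun s => by positivity,
    fun s hs u v hu hv => ?_⟩
  obtain ⟨hmem, hle⟩ := memSob_convC_and_sobN_le hσ hs hσn hu hv
  have hcoef : 2 ^ σ * √(latticeZeta n (2 * σ)) ≤ (2 * σ) ^ σ * √(latticeZeta n (2 * σ)) := by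
    gcongr
    linarith
  refine ⟨hmem, hle.trans ?_⟩
  simp only [max_eq_left (hσ.trans hs), max_eq_left hσ]
  exact add_le_add le_rfl (mul_le_mul_of_nonneg_right
    (mul_le_mul_of_nonneg_right hcoef (Real.sqrt_nonneg _)) (Real.sqrt_nonneg _))

/-- **Interpolation.** For `s ≥ s_n := [n/2] + 1` there is an increasing
(positive) `C(s)` with `‖uv‖_s ≤ C(s)‖u‖_s‖v‖_{s_n} + C(s_n)‖u‖_{s_n}‖v‖_s` for all
`u, v ∈ H^s(𝕋^n)`; in particular `H^s(𝕋^n)` is an algebra for `s ≥ s_n`. -/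
theorem stmt3 (n : ℕ) (hn : 1 ≤ n) :
    ∃ C : ℝ → ℝ, Monotone C ∧ (∀ s, 0 < C s) ∧
      ∀ s : ℝ, ((n / 2 + 1 : ℕ) : ℝ) ≤ s →
        ∀ u v : (Fin n → ℤ) → ℂ, MemSob s u → MemSob s v →
          MemSob s (convC u v) ∧
          sobN s (convC u v) ≤
            C s * sobN s u * sobN ((n / 2 + 1 : ℕ) : ℝ) v +
              C ((n / 2 + 1 : ℕ) : ℝ) * sobN ((n / 2 + 1 : ℕ) : ℝ) u * sobN s v :=
  stmt3_general n
end

section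
/- (Decay norm controls the operator norm) Let d ≥ 1, ν ≥ 1, s₀ := [(ν+d)/2] + 1 and s ≥ 0. Let R ∈ B(L²₀(𝕋^d)) be a bounded linear operator (independent of φ) with finite block-decay norm |R|_{s+2s₀} := sup_{α,β ∈ σ₀(√−Δ)} ⟨α,β⟩^{s+2s₀} ‖[R]_α^β‖_HS, where ⟨α,β⟩ := max{α,β}. Then R maps L²₀(𝕋^d) into H^s₀(𝕋^d) and ‖R‖_{B(L²₀, H^s₀)} ≤ C |R|_{s+2s₀} for a constant C depending only on ν, d. As a consequence R ∈ B(H^s₀(𝕋^d)) with ‖R‖_{B(H^s₀)} ≤ C |R|_{s+2s₀}. -/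
/-- Nonzero lattice points of `ℤ^d`. -/
abbrev Idx (d : ℕ) := {j : Fin d → ℤ // j ≠ 0}

/-- `|j|` for a nonzero lattice point. -/
noncomputable def jn {d : ℕ} (j : Idx d) : ℝ := euclNormZ j.1

/-- The set `σ₀(√−Δ)`, as a subtype of `ℝ`. -/
def specT (d : ℕ) := {r : ℝ // ∃ j : Idx d, jn j = r}

/-- Squared Hilbert–Schmidt norm of the block `[M]_α^β`. -/
noncomputable def blockHSsq {d : ℕ} (M : Idx d → Idx d → ℂ) (α β : ℝ) : ℝ :=
  ∑' j : Idx d, ∑' j' : Idx d, if jn j = α ∧ jn j' = β then ‖M j j'‖ ^ 2 else 0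

/-- The block-decay norm `|R|_s = sup_{α,β} ⟨α,β⟩^s ‖[R]_α^β‖_HS` of a `φ`-independent
operator given by its matrix of Fourier coefficients. -/
noncomputable def decayX {d : ℕ} (s : ℝ) (M : Idx d → Idx d → ℂ) : ℝ :=
  ⨆ p : specT d × specT d,
    (max (p.1.1 : ℝ) (p.2.1 : ℝ)) ^ s * Real.sqrt (blockHSsq M p.1.1 p.2.1)

/-- Action of the matrix `M` on a (coefficient) function `u ∈ L²₀(𝕋^d)`. -/
noncomputable def matApply {d : ℕ} (M : Idx d → Idx d → ℂ) (u : Idx d → ℂ) :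
    Idx d → ℂ :=
  fun j => ∑' j' : Idx d, M j j' * u j'

lemma jn_nonneg {d : ℕ} (j : Idx d) : 0 ≤ jn j := Real.sqrt_nonneg _

lemma one_le_jn {d : ℕ} (j : Idx d) : 1 ≤ jn j := by
  obtain ⟨i, hi⟩ := Function.ne_iff.mp j.2
  have h1 : (1 : ℝ) ≤ ((j.1 i : ℝ)) ^ 2 := by
    have hi' : j.1 i ≠ 0 := by simpa using hi
    have : (1 : ℤ) ≤ (j.1 i) ^ 2 := by
      rcases lt_or_gt_of_ne hi' with h | h
      · nlinarith
      · nlinarith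
    exact_mod_cast this
  have : (1 : ℝ) ≤ ∑ k, ((j.1 k : ℝ)) ^ 2 :=
    h1.trans (Finset.single_le_sum (f := fun k => ((j.1 k : ℝ))^2)
      (fun k _ => sq_nonneg _) (Finset.mem_univ i))
  calc (1:ℝ) = Real.sqrt 1 := (Real.sqrt_one).symm
  _ ≤ jn j := Real.sqrt_le_sqrt this

lemma jn_pos {d : ℕ} (j : Idx d) : 0 < jn j := lt_of_lt_of_le one_pos (one_le_jn j)

lemma shell_finite (d : ℕ) (α : ℝ) : {j : Idx d | jn j = α}.Finite := by

  set N : ℤ := ⌈|α|⌉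
  have hS : (Set.pi Set.univ (fun _ : Fin d => Set.Icc (-N) N)).Finite :=
    Set.Finite.pi (fun _ => Set.finite_Icc _ _)
  have hsub : (Subtype.val '' {j : Idx d | jn j = α}) ⊆
      Set.pi Set.univ (fun _ : Fin d => Set.Icc (-N) N) := by
    rintro f ⟨j, hj, rfl⟩ i _
    have hsum : ∑ k, ((j.1 k : ℝ)) ^ 2 = α ^ 2 := by
      have := hj
      simp only [Set.mem_setOf_eq, jn, euclNormZ] at this
      have h0 : (0:ℝ) ≤ ∑ k, ((j.1 k : ℝ)) ^ 2 := by positivity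
      rw [← this, Real.sq_sqrt h0]
    have hterm : ((j.1 i : ℝ)) ^ 2 ≤ α ^ 2 := by
      rw [← hsum]
      exact Finset.single_le_sum (f := fun k => ((j.1 k : ℝ))^2)
        (fun k _ => sq_nonneg _) (Finset.mem_univ i)
    have habs : |(j.1 i : ℝ)| ≤ |α| := by
      apply abs_le_of_sq_le_sq _ (abs_nonneg _)
      rwa [sq_abs]
    have hle : |(j.1 i : ℝ)| ≤ (N : ℝ) := habs.trans (Int.le_ceil _)
    have := abs_le.mp hle
    constructor
    · exact_mod_cast this.1
    · exact_mod_cast this.2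
  have : (Subtype.val '' {j : Idx d | jn j = α}).Finite := hS.subset hsub
  exact Set.Finite.of_finite_image this (Set.injOn_of_injective Subtype.val_injective)

lemma summable_shell {d : ℕ} (f : Idx d → ℝ) (α : ℝ)
    (hf : ∀ j, jn j ≠ α → f j = 0) : Summable f := by

  apply summable_of_ne_finset_zero (s := (shell_finite d α).toFinset)
  intro j hj
  apply hf
  intro h
  exact hj ((shell_finite d α).mem_toFinset.mpr h)

lemma blockHSsq_nonneg {d : ℕ} (M : Idx d → Idx d → ℂ) (α β : ℝ) :
    0 ≤ blockHSsq M α β := by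
  apply tsum_nonneg
  intro j
  apply tsum_nonneg
  intro j'
  positivity

lemma entry_sq_le_blockHSsq {d : ℕ} (M : Idx d → Idx d → ℂ) (j j' : Idx d) :
    ‖M j j'‖ ^ 2 ≤ blockHSsq M (jn j) (jn j') := by
  have hinner : ∀ k : Idx d, Summable (fun k' : Idx d =>
      if jn k = jn j ∧ jn k' = jn j' then ‖M k k'‖ ^ 2 else 0) := by
    intro k
    apply summable_shell _ (jn j')
    intro k' hk'
    simp [hk']
  have houter : Summable (fun k : Idx d =>
      ∑' k' : Idx d, if jn k = jn j ∧ jn k' = jn j' then ‖M k k'‖ ^ 2 else 0) := by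
    apply summable_shell _ (jn j)
    intro k hk
    calc (∑' k' : Idx d, if jn k = jn j ∧ jn k' = jn j' then ‖M k k'‖ ^ 2 else 0)
        = ∑' _k' : Idx d, (0:ℝ) := tsum_congr (fun k' => by simp [hk])
    _ = 0 := tsum_zero
  have h1 : ‖M j j'‖ ^ 2 ≤
      ∑' k' : Idx d, if jn j = jn j ∧ jn k' = jn j' then ‖M j k'‖ ^ 2 else 0 := by
    have := Summable.le_tsum (hinner j) j' (fun k' _ => by positivity)
    simpa using this
  have h2 : (∑' k' : Idx d, if jn j = jn j ∧ jn k' = jn j' then ‖M j k'‖ ^ 2 else 0) ≤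
      blockHSsq M (jn j) (jn j') :=
    Summable.le_tsum houter j (fun k _ => tsum_nonneg (fun k' => by positivity))
  exact h1.trans h2

lemma decayX_nonneg {d : ℕ} (hd : 1 ≤ d) {s : ℝ} {M : Idx d → Idx d → ℂ}
    (hB : BddAbove (Set.range fun p : specT d × specT d =>
      (max (p.1.1 : ℝ) (p.2.1 : ℝ)) ^ s * Real.sqrt (blockHSsq M p.1.1 p.2.1))) :
    0 ≤ decayX s M := by
  have j0 : Idx d := ⟨fun _ => 1, by
    intro h
    have := congrFun h ⟨0, hd⟩
    simp at this⟩
  have hle := le_ciSup hB (⟨⟨jn j0, j0, rfl⟩, ⟨jn j0, j0, rfl⟩⟩ : specT d × specT d)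
  refine le_trans ?_ hle
  have : (0:ℝ) ≤ max (jn j0) (jn j0) := le_max_of_le_left (jn_nonneg j0)
  positivity

lemma entry_le_decay {d : ℕ} {s : ℝ} {M : Idx d → Idx d → ℂ}
    (hB : BddAbove (Set.range fun p : specT d × specT d =>
      (max (p.1.1 : ℝ) (p.2.1 : ℝ)) ^ s * Real.sqrt (blockHSsq M p.1.1 p.2.1)))
    (j j' : Idx d) :
    ‖M j j'‖ ≤ decayX s M * (max (jn j) (jn j')) ^ (-s) := by
  set m : ℝ := max (jn j) (jn j') with hm
  have hm1 : 1 ≤ m := le_max_of_le_left (one_le_jn j)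
  have hm0 : 0 < m := lt_of_lt_of_le one_pos hm1
  have hkey := le_ciSup hB (⟨⟨jn j, j, rfl⟩, ⟨jn j', j', rfl⟩⟩ : specT d × specT d)
  have hMle : ‖M j j'‖ ≤ Real.sqrt (blockHSsq M (jn j) (jn j')) := by
    rw [show ‖M j j'‖ = Real.sqrt (‖M j j'‖ ^ 2) by rw [Real.sqrt_sq (norm_nonneg _)]]
    exact Real.sqrt_le_sqrt (entry_sq_le_blockHSsq M j j')
  have hms : 0 < m ^ s := Real.rpow_pos_of_pos hm0 s
  have : m ^ s * ‖M j j'‖ ≤ decayX s M := by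
    refine le_trans ?_ hkey
    exact mul_le_mul_of_nonneg_left hMle (le_of_lt hms)
  calc ‖M j j'‖ = (m ^ s)⁻¹ * (m ^ s * ‖M j j'‖) := by field_simp
  _ ≤ (m ^ s)⁻¹ * decayX s M := mul_le_mul_of_nonneg_left this (by positivity)
  _ = decayX s M * m ^ (-s) := by rw [Real.rpow_neg (le_of_lt hm0)]; ring

lemma int_base_summable {r : ℝ} (hr : 1 < r) :
    Summable (fun n : ℤ => (1 + |(n : ℝ)|) ^ (-r)) := by
  have h1 : Summable (fun n : ℤ => |(n : ℝ)| ^ (-r)) := Real.summable_abs_int_rpow hr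
  have h2 : Summable (fun n : ℤ => if n = 0 then (1:ℝ) else 0) := by
    apply summable_of_ne_finset_zero (s := {0})
    intro n hn
    simp [Finset.mem_singleton.not.mp hn]
  apply Summable.of_nonneg_of_le (fun n => Real.rpow_nonneg (by positivity) _)
    (fun n => ?_) (h1.add h2)
  by_cases hn : n = 0
  · simp [hn, Real.zero_rpow_nonneg]
  · have hn1 : (1:ℝ) ≤ |(n:ℝ)| := by
      have : (1:ℤ) ≤ |n| := by
        rcases lt_or_gt_of_ne hn with h | h
        · rw [abs_of_neg h]; omega
        · rw [abs_of_pos h]; omega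
      calc (1:ℝ) ≤ ((|n| : ℤ) : ℝ) := by exact_mod_cast this
      _ = |(n:ℝ)| := by push_cast; ring
    have : (1 + |(n:ℝ)|) ^ (-r) ≤ |(n:ℝ)| ^ (-r) :=
      Real.rpow_le_rpow_of_nonpos (by linarith) (by linarith) (by linarith)
    have h0 : (0:ℝ) ≤ if n = 0 then (1:ℝ) else 0 := by positivity
    linarith

lemma pi_prod_summable (g : ℤ → ℝ) (hg : Summable g) (h0 : ∀ x, 0 ≤ g x) :
    ∀ n : ℕ, Summable (fun f : Fin n → ℤ => ∏ i, g (f i)) := by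
  intro n
  induction n with
  | zero => exact Summable.of_finite
  | succ m ih =>
    have hg0 : (0 : ℤ → ℝ) ≤ g := fun x => h0 x
    have hih0 : (0 : (Fin m → ℤ) → ℝ) ≤ fun f : Fin m → ℤ => ∏ i, g (f i) :=
      fun f => Finset.prod_nonneg (fun i _ => h0 _)
    have hprod := Summable.mul_of_nonneg hg ih hg0 hih0
    refine (Equiv.summable_iff (Fin.consEquiv (fun _ : Fin (m+1) => ℤ))).mp
      (hprod.congr fun p => ?_)
    simp only [Function.comp_apply, Fin.consEquiv_apply]
    rw [Fin.prod_univ_succ]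
    simp

lemma prod_le_jn_pow {d : ℕ} (j : Idx d) :
    ∏ i, (1 + |(j.1 i : ℝ)|) ≤ 2 ^ d * (jn j) ^ d := by
  have hsq : (∏ i, (1 + |(j.1 i : ℝ)|)) ^ 2 ≤ (4:ℝ) ^ d * (jn j) ^ (2 * d) := by
    have step1 : (∏ i, (1 + |(j.1 i : ℝ)|)) ^ 2 = ∏ i, (1 + |(j.1 i : ℝ)|) ^ 2 := by
      rw [Finset.prod_pow]
    have step2 : ∀ i, (1 + |(j.1 i : ℝ)|) ^ 2 ≤ 2 * (1 + ((j.1 i : ℝ)) ^ 2) := by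
      intro i
      have := abs_nonneg ((j.1 i : ℝ))
      nlinarith [sq_abs ((j.1 i : ℝ)), sq_nonneg (1 - |(j.1 i : ℝ)|)]
    have step3 : ∏ i, (1 + |(j.1 i : ℝ)|) ^ 2 ≤ ∏ i : Fin d, (2 * (1 + ((j.1 i : ℝ)) ^ 2)) :=
      Finset.prod_le_prod (fun i _ => by positivity) (fun i _ => step2 i)
    have step4 : ∏ i : Fin d, (2 * (1 + ((j.1 i : ℝ)) ^ 2)) =
        2 ^ d * ∏ i, (1 + ((j.1 i : ℝ)) ^ 2) := by
      rw [Finset.prod_mul_distrib, Finset.prod_const, Finset.card_univ, Fintype.card_fin]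
    have hjsq : jn j ^ 2 = ∑ i, ((j.1 i : ℝ)) ^ 2 := by
      rw [jn, euclNormZ, Real.sq_sqrt (by positivity)]
    have step5 : ∀ i, 1 + ((j.1 i : ℝ)) ^ 2 ≤ 2 * (jn j) ^ 2 := by
      intro i
      have h1 : ((j.1 i : ℝ)) ^ 2 ≤ jn j ^ 2 := by
        rw [hjsq]
        exact Finset.single_le_sum (f := fun k => ((j.1 k : ℝ))^2)
          (fun k _ => sq_nonneg _) (Finset.mem_univ i)
      have h2 : (1:ℝ) ≤ jn j ^ 2 := by nlinarith [one_le_jn j]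
      linarith
    have step6 : ∏ i : Fin d, (1 + ((j.1 i : ℝ)) ^ 2) ≤ ∏ _i : Fin d, (2 * (jn j) ^ 2) :=
      Finset.prod_le_prod (fun i _ => by positivity) (fun i _ => step5 i)
    have step7 : ∏ _i : Fin d, (2 * (jn j) ^ 2) = 2 ^ d * (jn j) ^ (2 * d) := by
      rw [Finset.prod_const, Finset.card_univ, Fintype.card_fin, mul_pow, ← pow_mul]
    calc (∏ i, (1 + |(j.1 i : ℝ)|)) ^ 2 = ∏ i, (1 + |(j.1 i : ℝ)|) ^ 2 := step1
    _ ≤ ∏ i : Fin d, (2 * (1 + ((j.1 i : ℝ)) ^ 2)) := step3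
    _ = 2 ^ d * ∏ i, (1 + ((j.1 i : ℝ)) ^ 2) := step4
    _ ≤ 2 ^ d * (2 ^ d * (jn j) ^ (2*d)) := by
        refine mul_le_mul_of_nonneg_left ?_ (by positivity)
        rw [← step7]; exact step6
    _ = (4:ℝ) ^ d * (jn j) ^ (2 * d) := by rw [← mul_assoc, ← mul_pow]; norm_num
  have hL : (0:ℝ) ≤ ∏ i, (1 + |(j.1 i : ℝ)|) := Finset.prod_nonneg (fun i _ => by positivity)
  have hR : (0:ℝ) ≤ 2 ^ d * (jn j) ^ d :=
    mul_nonneg (by positivity) (pow_nonneg (jn_nonneg j) d)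
  have : (2:ℝ) ^ d * (jn j) ^ d = Real.sqrt ((4:ℝ) ^ d * (jn j) ^ (2*d)) := by
    rw [show (4:ℝ)^d * (jn j)^(2*d) = (2^d * (jn j)^d)^2 by
      rw [mul_pow, ← pow_mul, ← pow_mul, show (4:ℝ) = 2^2 by norm_num, ← pow_mul]
      ring_nf]

    rw [Real.sqrt_sq hR]
  rw [this]
  calc ∏ i, (1 + |(j.1 i : ℝ)|) = Real.sqrt ((∏ i, (1 + |(j.1 i : ℝ)|))^2) :=
        (Real.sqrt_sq hL).symm
  _ ≤ Real.sqrt ((4:ℝ) ^ d * (jn j) ^ (2*d)) := Real.sqrt_le_sqrt hsq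

lemma jn_rpow_summable {d : ℕ} (hd : 1 ≤ d) {t : ℝ} (ht : (d : ℝ) < t) :
    Summable (fun j : Idx d => (jn j) ^ (-t)) := by
  have hd0 : (0:ℝ) < d := by exact_mod_cast hd
  set r : ℝ := t / d with hr_def
  have hr : 1 < r := (one_lt_div hd0).mpr ht
  have hdr : (d : ℝ) * r = t := by rw [hr_def]; field_simp
  have hbase : Summable (fun n : ℤ => (1 + |(n : ℝ)|) ^ (-r)) := int_base_summable hr
  have hbase0 : ∀ n : ℤ, 0 ≤ (1 + |(n : ℝ)|) ^ (-r) :=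
    fun n => Real.rpow_nonneg (by positivity) _
  have hG : Summable (fun f : Fin d → ℤ => ∏ i, (1 + |(f i : ℝ)|) ^ (-r)) :=
    pi_prod_summable _ hbase hbase0 d
  have hGsub : Summable ((fun f : Fin d → ℤ => ∏ i, (1 + |(f i : ℝ)|) ^ (-r)) ∘
      (Subtype.val : Idx d → (Fin d → ℤ))) :=
    hG.comp_injective Subtype.val_injective
  have hGsub2 : Summable (fun j : Idx d =>
      (2:ℝ) ^ t * ∏ i, (1 + |(j.1 i : ℝ)|) ^ (-r)) := hGsub.mul_left _
  apply Summable.of_nonneg_of_le (fun j => Real.rpow_nonneg (jn_nonneg j) _) _ hGsub2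
  intro j
  have hfac : ∀ i : Fin d, (0:ℝ) < 1 + |(j.1 i : ℝ)| := fun i => by positivity
  have hprodpos : (0:ℝ) < ∏ i, (1 + |(j.1 i : ℝ)|) :=
    Finset.prod_pos (fun i _ => hfac i)
  have hProdEq : ∏ i, (1 + |(j.1 i : ℝ)|) ^ (-r) = (∏ i, (1 + |(j.1 i : ℝ)|)) ^ (-r) :=
    Real.finset_prod_rpow _ _ (fun i _ => (hfac i).le) _
  rw [hProdEq]
  have h1 : (2 ^ d * (jn j) ^ d : ℝ) ^ (-r) ≤ (∏ i, (1 + |(j.1 i : ℝ)|)) ^ (-r) :=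
    Real.rpow_le_rpow_of_nonpos hprodpos (prod_le_jn_pow j) (by linarith)
  have hjpos := jn_pos j
  have heq : (2 ^ d * (jn j) ^ d : ℝ) ^ (-r) = (2:ℝ) ^ (-t) * jn j ^ (-t) := by
    rw [Real.mul_rpow (by positivity) (pow_nonneg (jn_nonneg j) d),
      ← Real.rpow_natCast (2:ℝ) d, ← Real.rpow_natCast (jn j) d,
      ← Real.rpow_mul (by norm_num : (0:ℝ) ≤ 2), ← Real.rpow_mul (jn_nonneg j),
      mul_neg, hdr]
  have h2 : jn j ^ (-t) = (2:ℝ) ^ t * ((2:ℝ) ^ (-t) * jn j ^ (-t)) := by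
    rw [← mul_assoc, ← Real.rpow_add (by norm_num : (0:ℝ) < 2), add_neg_cancel,
      Real.rpow_zero, one_mul]
  calc jn j ^ (-t) = (2:ℝ) ^ t * ((2:ℝ) ^ (-t) * jn j ^ (-t)) := h2
  _ = (2:ℝ) ^ t * ((2 ^ d * jn j ^ d : ℝ) ^ (-r)) := by rw [heq]
  _ ≤ (2:ℝ) ^ t * (∏ i, (1 + |(j.1 i : ℝ)|)) ^ (-r) :=
      mul_le_mul_of_nonneg_left h1 (Real.rpow_nonneg (by norm_num) _)

lemma tsum_cs {ι : Type*} (a b : ι → ℝ) (ha : ∀ i, 0 ≤ a i) (hb : ∀ i, 0 ≤ b i)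
    (hA : Summable fun i => a i ^ 2) (hB : Summable fun i => b i ^ 2) :
    Summable (fun i => a i * b i) ∧
    ∑' i, a i * b i ≤ Real.sqrt (∑' i, a i ^ 2) * Real.sqrt (∑' i, b i ^ 2) := by
  have hsum : Summable (fun i => a i * b i) := by
    apply Summable.of_nonneg_of_le (fun i => mul_nonneg (ha i) (hb i))
      (fun i => ?_) ((hA.add hB).div_const 2)
    nlinarith [sq_nonneg (a i - b i)]
  refine ⟨hsum, Summable.tsum_le_of_sum_le hsum (fun s => ?_)⟩
  have h1 : (∑ i ∈ s, a i * b i) ^ 2 ≤ (∑ i ∈ s, a i ^ 2) * ∑ i ∈ s, b i ^ 2 :=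
    Finset.sum_mul_sq_le_sq_mul_sq s a b
  have h2 : ∑ i ∈ s, a i * b i ≤
      Real.sqrt (∑ i ∈ s, a i ^ 2) * Real.sqrt (∑ i ∈ s, b i ^ 2) := by
    rw [← Real.sqrt_mul (Finset.sum_nonneg (fun i _ => sq_nonneg (a i)))]
    calc ∑ i ∈ s, a i * b i
        = Real.sqrt ((∑ i ∈ s, a i * b i) ^ 2) :=
          (Real.sqrt_sq (Finset.sum_nonneg (fun i _ => mul_nonneg (ha i) (hb i)))).symm
    _ ≤ _ := Real.sqrt_le_sqrt h1
  refine h2.trans (mul_le_mul ?_ ?_ (Real.sqrt_nonneg _) (Real.sqrt_nonneg _))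
  · exact Real.sqrt_le_sqrt (Summable.sum_le_tsum s (fun i _ => sq_nonneg _) hA)
  · exact Real.sqrt_le_sqrt (Summable.sum_le_tsum s (fun i _ => sq_nonneg _) hB)

/-- **Decay norm controls the operator norm.** If `|R|_{s+2s₀} < ∞`
(`s₀ := [(ν+d)/2]+1`), then `R` maps `L²₀(𝕋^d)` into `H^s₀(𝕋^d)` with
`‖R‖_{B(L²₀,H^s₀)} ≤ C |R|_{s+2s₀}`; as a consequence `R ∈ B(H^s₀(𝕋^d))` with the same
bound, `C` depending only on `ν, d`. -/
theorem stmt13 (ν d : ℕ) (hν : 1 ≤ ν) (hd : 1 ≤ d) :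
    ∃ C : ℝ, 0 < C ∧
      ∀ s : ℝ, 0 ≤ s →
        ∀ M : Idx d → Idx d → ℂ,
          BddAbove (Set.range fun p : specT d × specT d =>
            (max (p.1.1 : ℝ) (p.2.1 : ℝ)) ^ (s + 2 * (((ν + d) / 2 + 1 : ℕ) : ℝ)) *
              Real.sqrt (blockHSsq M p.1.1 p.2.1)) →
          (∀ u : Idx d → ℂ, Summable (fun j : Idx d => ‖u j‖ ^ 2) →
            Summable (fun j : Idx d => (jn j) ^ (2 * s) * ‖matApply M u j‖ ^ 2) ∧
            Real.sqrt (∑' j : Idx d, (jn j) ^ (2 * s) * ‖matApply M u j‖ ^ 2) ≤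
              C * decayX (s + 2 * (((ν + d) / 2 + 1 : ℕ) : ℝ)) M *
                Real.sqrt (∑' j : Idx d, ‖u j‖ ^ 2)) ∧
          (∀ u : Idx d → ℂ,
            Summable (fun j : Idx d => (jn j) ^ (2 * s) * ‖u j‖ ^ 2) →
            Real.sqrt (∑' j : Idx d, (jn j) ^ (2 * s) * ‖matApply M u j‖ ^ 2) ≤
              C * decayX (s + 2 * (((ν + d) / 2 + 1 : ℕ) : ℝ)) M *
                Real.sqrt (∑' j : Idx d, (jn j) ^ (2 * s) * ‖u j‖ ^ 2)) := by
  set s₀ : ℝ := (((ν + d) / 2 + 1 : ℕ) : ℝ) with hs₀_def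
  have hs₀_pos : 0 < s₀ := by
    rw [hs₀_def]; exact_mod_cast Nat.succ_pos _
  have hd2s₀ : (d : ℝ) < 2 * s₀ := by
    have : d < 2 * ((ν + d) / 2 + 1) := by omega
    rw [hs₀_def]; exact_mod_cast this
  have hK : Summable (fun j : Idx d => (jn j) ^ (-(2 * s₀))) := jn_rpow_summable hd hd2s₀
  set K : ℝ := ∑' j : Idx d, (jn j) ^ (-(2 * s₀)) with hK_def
  have hK0 : 0 ≤ K := tsum_nonneg (fun j => Real.rpow_nonneg (jn_nonneg j) _)
  refine ⟨K + 1, by linarith, ?_⟩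
  intro s hs M hB
  set p : ℝ := s + 2 * s₀ with hp_def
  set D : ℝ := decayX p M with hD_def
  have hD0 : 0 ≤ D := decayX_nonneg hd hB
  -- the weight function
  set a : Idx d → ℝ := fun j => jn j ^ (-s₀) with ha_def
  have ha0 : ∀ j, 0 ≤ a j := fun j => Real.rpow_nonneg (jn_nonneg j) _
  have ha_sq : ∀ j, a j ^ 2 = jn j ^ (-(2 * s₀)) := by
    intro j
    rw [ha_def, sq, ← Real.rpow_add (jn_pos j)]
    ring_nf
  have hAsq : Summable (fun j : Idx d => a j ^ 2) := by
    apply hK.congr; intro j; rw [ha_sq]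
  have hsumAsq : ∑' j : Idx d, a j ^ 2 = K := by
    rw [hK_def]; exact tsum_congr ha_sq
  -- key pointwise estimate
  have key : ∀ j j' : Idx d, jn j ^ s * ‖M j j'‖ ≤ D * (a j * a j') := by
    intro j j'
    set m : ℝ := max (jn j) (jn j') with hm_def
    have hm1 : 1 ≤ m := le_max_of_le_left (one_le_jn j)
    have hm0 : 0 < m := lt_of_lt_of_le one_pos hm1
    have hMle : ‖M j j'‖ ≤ D * m ^ (-p) := entry_le_decay hB j j'
    have h1 : jn j ^ s ≤ m ^ s := Real.rpow_le_rpow (jn_nonneg j) (le_max_left _ _) hs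
    have h2 : jn j ^ s * ‖M j j'‖ ≤ m ^ s * (D * m ^ (-p)) :=
      mul_le_mul h1 hMle (norm_nonneg _) (Real.rpow_nonneg hm0.le s)
    have h3 : m ^ s * (D * m ^ (-p)) = D * m ^ (-(2 * s₀)) := by
      rw [show m ^ s * (D * m ^ (-p)) = D * (m ^ s * m ^ (-p)) by ring,
        ← Real.rpow_add hm0, hp_def]
      ring_nf
    have h4 : m ^ (-(2 * s₀)) ≤ a j * a j' := by
      have hprod : jn j * jn j' ≤ m ^ 2 := by
        rw [sq]
        exact mul_le_mul (le_max_left _ _) (le_max_right _ _) (jn_nonneg j') hm0.le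
      have hprodpos : 0 < jn j * jn j' := mul_pos (jn_pos j) (jn_pos j')
      have e1 : m ^ (-(2 * s₀)) = (m ^ 2) ^ (-s₀) := by
        rw [← Real.rpow_natCast m 2, ← Real.rpow_mul hm0.le]
        norm_num
      have e2 : a j * a j' = (jn j * jn j') ^ (-s₀) := by
        rw [ha_def, Real.mul_rpow (jn_nonneg j) (jn_nonneg j')]
      rw [e1, e2]
      exact Real.rpow_le_rpow_of_nonpos hprodpos hprod (by linarith)
    calc jn j ^ s * ‖M j j'‖ ≤ m ^ s * (D * m ^ (-p)) := h2
    _ = D * m ^ (-(2 * s₀)) := h3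
    _ ≤ D * (a j * a j') := mul_le_mul_of_nonneg_left h4 hD0
  have hjs1 : ∀ j : Idx d, (1:ℝ) ≤ jn j ^ s := by
    intro j
    have := Real.rpow_le_rpow_of_exponent_le (one_le_jn j) hs
    rwa [Real.rpow_zero] at this
  have hjn2s : ∀ j : Idx d, jn j ^ (2 * s) = (jn j ^ s) ^ 2 := by
    intro j
    rw [sq, ← Real.rpow_add (jn_pos j)]
    ring_nf
  -- main estimate for an L² function u
  have main : ∀ u : Idx d → ℂ, Summable (fun j : Idx d => ‖u j‖ ^ 2) →
      Summable (fun j : Idx d => (jn j) ^ (2 * s) * ‖matApply M u j‖ ^ 2) ∧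
      Real.sqrt (∑' j : Idx d, (jn j) ^ (2 * s) * ‖matApply M u j‖ ^ 2) ≤
        (K + 1) * D * Real.sqrt (∑' j : Idx d, ‖u j‖ ^ 2) := by
    intro u hu
    obtain ⟨hT_sum, hT_le⟩ := tsum_cs a (fun j => ‖u j‖) ha0 (fun j => norm_nonneg _) hAsq hu
    rw [hsumAsq] at hT_le
    set T : ℝ := ∑' j : Idx d, a j * ‖u j‖ with hT_def
    have hT0 : 0 ≤ T := tsum_nonneg (fun j => mul_nonneg (ha0 j) (norm_nonneg _))
    set U : ℝ := ∑' j : Idx d, ‖u j‖ ^ 2 with hU_def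
    have hU0 : 0 ≤ U := tsum_nonneg (fun j => sq_nonneg _)
    -- pointwise in j
    have hptwise : ∀ j : Idx d, jn j ^ s * ‖matApply M u j‖ ≤ D * a j * T := by
      intro j
      have hw : ∀ j' : Idx d, jn j ^ s * ‖M j j' * u j'‖ ≤ (D * a j) * (a j' * ‖u j'‖) := by
        intro j'
        rw [norm_mul, ← mul_assoc]
        calc jn j ^ s * ‖M j j'‖ * ‖u j'‖ ≤ D * (a j * a j') * ‖u j'‖ :=
          mul_le_mul_of_nonneg_right (key j j') (norm_nonneg _)
        _ = (D * a j) * (a j' * ‖u j'‖) := by ring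
      have hMu_sum : Summable (fun j' : Idx d => ‖M j j' * u j'‖) := by
        apply Summable.of_nonneg_of_le (fun j' => norm_nonneg _) (fun j' => ?_)
          (hT_sum.mul_left (D * a j))
        calc ‖M j j' * u j'‖ ≤ jn j ^ s * ‖M j j' * u j'‖ :=
          le_mul_of_one_le_left (norm_nonneg _) (hjs1 j)
        _ ≤ (D * a j) * (a j' * ‖u j'‖) := hw j'
      have hnorm : ‖matApply M u j‖ ≤ ∑' j' : Idx d, ‖M j j' * u j'‖ :=
        norm_tsum_le_tsum_norm hMu_sum
      calc jn j ^ s * ‖matApply M u j‖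
          ≤ jn j ^ s * ∑' j' : Idx d, ‖M j j' * u j'‖ :=
            mul_le_mul_of_nonneg_left hnorm (Real.rpow_nonneg (jn_nonneg j) s)
      _ = ∑' j' : Idx d, jn j ^ s * ‖M j j' * u j'‖ := (tsum_mul_left).symm
      _ ≤ ∑' j' : Idx d, (D * a j) * (a j' * ‖u j'‖) :=
            Summable.tsum_le_tsum hw (hMu_sum.mul_left _) (hT_sum.mul_left _)
      _ = (D * a j) * T := tsum_mul_left
      _ = D * a j * T := by ring
    have hpt2 : ∀ j : Idx d, jn j ^ (2 * s) * ‖matApply M u j‖ ^ 2 ≤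
        (D * T) ^ 2 * a j ^ 2 := by
      intro j
      have h0 : 0 ≤ jn j ^ s * ‖matApply M u j‖ :=
        mul_nonneg (Real.rpow_nonneg (jn_nonneg j) s) (norm_nonneg _)
      have := pow_le_pow_left₀ h0 (hptwise j) 2
      calc jn j ^ (2 * s) * ‖matApply M u j‖ ^ 2
          = (jn j ^ s * ‖matApply M u j‖) ^ 2 := by rw [hjn2s j, mul_pow]
      _ ≤ (D * a j * T) ^ 2 := this
      _ = (D * T) ^ 2 * a j ^ 2 := by ring
    have hsum2 : Summable (fun j : Idx d => jn j ^ (2 * s) * ‖matApply M u j‖ ^ 2) := by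
      apply Summable.of_nonneg_of_le (fun j => ?_) hpt2 (hAsq.mul_left ((D * T) ^ 2))
      exact mul_nonneg (Real.rpow_nonneg (jn_nonneg j) _) (sq_nonneg _)
    refine ⟨hsum2, ?_⟩
    have htsum_le : ∑' j : Idx d, jn j ^ (2 * s) * ‖matApply M u j‖ ^ 2 ≤
        (D * T) ^ 2 * K := by
      calc ∑' j : Idx d, jn j ^ (2 * s) * ‖matApply M u j‖ ^ 2
          ≤ ∑' j : Idx d, (D * T) ^ 2 * a j ^ 2 :=
            Summable.tsum_le_tsum hpt2 hsum2 (hAsq.mul_left _)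
      _ = (D * T) ^ 2 * ∑' j : Idx d, a j ^ 2 := tsum_mul_left
      _ = (D * T) ^ 2 * K := by rw [hsumAsq]
    calc Real.sqrt (∑' j : Idx d, jn j ^ (2 * s) * ‖matApply M u j‖ ^ 2)
        ≤ Real.sqrt ((D * T) ^ 2 * K) := Real.sqrt_le_sqrt htsum_le
    _ = (D * T) * Real.sqrt K := by
        rw [Real.sqrt_mul (sq_nonneg _), Real.sqrt_sq (mul_nonneg hD0 hT0)]
    _ ≤ (D * (Real.sqrt K * Real.sqrt U)) * Real.sqrt K := by
        apply mul_le_mul_of_nonneg_right _ (Real.sqrt_nonneg _)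
        exact mul_le_mul_of_nonneg_left hT_le hD0
    _ = D * (Real.sqrt K * Real.sqrt K) * Real.sqrt U := by ring
    _ = D * K * Real.sqrt U := by rw [Real.mul_self_sqrt hK0]
    _ ≤ (K + 1) * D * Real.sqrt U := by nlinarith [Real.sqrt_nonneg U]
  refine ⟨main, ?_⟩
  intro u hu2
  have hu : Summable (fun j : Idx d => ‖u j‖ ^ 2) := by
    apply Summable.of_nonneg_of_le (fun j => sq_nonneg _) (fun j => ?_) hu2
    apply le_mul_of_one_le_left (sq_nonneg _)
    rw [hjn2s j]
    nlinarith [hjs1 j]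
  obtain ⟨hsum2, hle⟩ := main u hu
  refine hle.trans ?_
  apply mul_le_mul_of_nonneg_left _ (mul_nonneg (by linarith) hD0)
  apply Real.sqrt_le_sqrt
  apply Summable.tsum_le_tsum _ hu hu2
  intro j
  apply le_mul_of_one_le_left (sq_nonneg _)
  rw [hjn2s j]
  nlinarith [hjs1 j]
end
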